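/- Let P₀, P₁ be orthogonal projections on a complex Hilbert space H. Let Z ∈ B(H) be selfadjoint and P₀-codiagonal (P₀ Z P₀ = 0 and (1−P₀) Z (1−P₀) = 0), and let δ(t) = e^{itZ} P₀ e^{−itZ} for t ∈ [0,1] satisfy δ(1) = P₁. Assume δ is minimal in the space of orthogonal projections: ℓ_∞(δ) ≤ ℓ_∞(ρ) for every continuously differentiable curve ρ of orthogonal projections joining P₀ and P₁. Then for every continuously differentiable curve γ : [a,b] → B(H) such that each γ(t) is a partial isometry, each γ′(t) = iAγ(t) − iγ(t)B for some selfadjoint A, B, and γ(a) = P₀, γ(b) = P₁, one has ℓ(δ) ≤ ℓ(γ), where ℓ is the Finsler length built from the quotient norm on tangent vectors to partial isometries. -/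

import Mathlib

/-!
If `γ` is a curve of partial isometries from `P₀` to `P₁`, then `ρ = γ γ*` is a curve of
projections with the same endpoints, and for any representation `γ' = i (A γ - γ B)` one has
`ρ' = i [A, γ γ*]`, so `‖ρ'‖ ≤ ‖A‖`. Hence `‖ρ'‖ ≤ |γ'|_γ` pointwise. Along `δ` the two lengths
agree, because the codiagonal part of `Z` with respect to `δ t` represents `δ'` and has norm
`‖δ'‖`. Minimality of `δ` among projection curves then gives `ℓ(δ) = ℓ_∞(δ) ≤ ℓ_∞(ρ) ≤ ℓ(γ)`.

The Finsler integrand is continuous, hence integrable: a tangent vector `E` at a partial isometry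
`V` has a representation of norm at most `3 ‖E‖`, read off from the block decomposition of `E`
with respect to the projections `V V*` and `V* V`.
-/

open NormedSpace Set

variable {H : Type*} [NormedAddCommGroup H] [InnerProductSpace ℂ H] [CompleteSpace H]

/-- The quotient Finsler norm of a tangent vector `W` at a partial isometry `V`:
`|W|_V = inf { max(‖A‖,‖B‖) : A,B selfadjoint, iAV − iVB = W }`. -/
noncomputable def finslerNorm (V W : H →L[ℂ] H) : ℝ :=
  sInf { r : ℝ | ∃ A B : H →L[ℂ] H, IsSelfAdjoint A ∧ IsSelfAdjoint B ∧
    Complex.I • (A * V) - Complex.I • (V * B) = W ∧ r = max ‖A‖ ‖B‖ }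

section

open Complex Filter Topology

def IsPartialIsometry {R : Type*} [Mul R] [Star R] (v : R) : Prop :=
  v * star v * v = v

namespace IsPartialIsometry

variable {R : Type*} [Ring R] [StarRing R] {v : R}

theorem star_mul_mul_star (hv : IsPartialIsometry v) : star v * v * star v = star v := by
  simpa [mul_assoc] using congrArg star hv

theorem isStarProjection_mul_star (hv : IsPartialIsometry v) : IsStarProjection (v * star v) :=
  ⟨by rw [IsIdempotentElem, ← mul_assoc, hv], .mul_star_self v⟩

theorem isStarProjection_star_mul (hv : IsPartialIsometry v) : IsStarProjection (star v * v) :=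
  ⟨by rw [IsIdempotentElem, ← mul_assoc, hv.star_mul_mul_star], .star_mul_self v⟩

theorem one_sub_mul_star_mul (hv : IsPartialIsometry v) : (1 - v * star v) * v = 0 := by
  rw [sub_mul, one_mul, hv, sub_self]

theorem mul_one_sub_star_mul (hv : IsPartialIsometry v) : v * (1 - star v * v) = 0 := by
  rw [mul_sub, mul_one, ← mul_assoc, hv, sub_self]

theorem one_sub_mul_mul_one_sub_eq_zero (hv : IsPartialIsometry v) (a b : R) :
    (1 - v * star v) * (a * v - v * b) * (1 - star v * v) = 0 := by
  calc _ = (1 - v * star v) * a * (v * (1 - star v * v))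
        - (1 - v * star v) * v * (b * (1 - star v * v)) := by noncomm_ring
    _ = 0 := by rw [hv.mul_one_sub_star_mul, hv.one_sub_mul_star_mul]; simp

theorem isSelfAdjoint_compress {a b : R} (hv : IsPartialIsometry v) (ha : IsSelfAdjoint a)
    (hb : IsSelfAdjoint b) :
    IsSelfAdjoint (v * star v * (a * v - v * b) * star v * (v * star v)) := by
  have hp : v * star v * (v * star v) = v * star v := hv.isStarProjection_mul_star.isIdempotentElem
  calc star _ = v * star v * (v * star v) * a * (v * star v)
        - v * star v * (v * b * star v) * (v * star v) := by
        simp only [star_mul, star_sub, star_star, ha.star_eq, hb.star_eq]; noncomm_ring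
    _ = v * star v * a * (v * star v * (v * star v))
        - v * star v * (v * b * star v) * (v * star v) := by rw [hp]
    _ = _ := by noncomm_ring

theorem block_decomposition {n : R} (hv : IsPartialIsometry v)
    (hn : (1 - v * star v) * n * (1 - star v * v) = 0) :
    (v * star v * n * star v * (v * star v) + ((1 - v * star v) * n * star v
      + star ((1 - v * star v) * n * star v))) * v
      + v * (star v * n * (1 - star v * v) + star (star v * n * (1 - star v * v))) = n := by
  have ht : star ((1 - v * star v) * n * star v) * v = 0 := by
    simp only [star_mul, star_star, star_sub, star_one, mul_assoc, hv.one_sub_mul_star_mul,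
      mul_zero]
  have hu : v * star (star v * n * (1 - star v * v)) = 0 := by
    simp only [star_mul, star_star, star_sub, star_one, ← mul_assoc, hv.mul_one_sub_star_mul,
      zero_mul]
  calc _ = v * star v * n * star v * (v * star v * v) + (1 - v * star v) * n * (star v * v)
        + star ((1 - v * star v) * n * star v) * v
        + (v * star v * n * (1 - star v * v) + v * star (star v * n * (1 - star v * v))) := by
        noncomm_ring
    _ = n - (1 - v * star v) * n * (1 - star v * v) := by
        rw [show v * star v * v = v from hv, ht, hu]; noncomm_ring
    _ = n := by rw [hn, sub_zero]

end IsPartialIsometry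

theorem IsStarProjection.isPartialIsometry {R : Type*} [Mul R] [StarMul R] {p : R}
    (hp : IsStarProjection p) : IsPartialIsometry p := by
  rw [IsPartialIsometry, hp.isSelfAdjoint.star_eq, hp.isIdempotentElem.eq, hp.isIdempotentElem.eq]

theorem IsStarProjection.mul_mul_star {R : Type*} [Monoid R] [StarMul R] {p u : R}
    (hp : IsStarProjection p) (hu : star u * u = 1) : IsStarProjection (u * p * star u) := by
  refine ⟨?_, hp.isSelfAdjoint.conjugate u⟩
  calc u * p * star u * (u * p * star u) = u * (p * (star u * u) * p) * star u := by
        simp only [mul_assoc]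
    _ = u * p * star u := by rw [hu, mul_one, hp.isIdempotentElem.eq, mul_assoc]

section CStarAlgebra

variable {E : Type*} [CStarAlgebra E]

theorem IsStarProjection.norm_mul_sub_mul_le {p : E} (hp : IsStarProjection p) (a : E) :
    ‖a * p - p * a‖ ≤ ‖a‖ := by
  have hs := hp.two_mul_sub_one_mem_unitary
  -- `p = (1 + s) / 2` with `s` a unitary, so `[a, p] = [a, s] / 2`
  have h : (2 : ℝ) • (a * p - p * a) = a * (2 * p - 1) - (2 * p - 1) * a := by
    simp only [two_smul, two_mul]; noncomm_ring
  have h2 : 2 * ‖a * p - p * a‖ ≤ 2 * ‖a‖ := by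
    calc 2 * ‖a * p - p * a‖ = ‖a * (2 * p - 1) - (2 * p - 1) * a‖ := by
          rw [← h, norm_smul, Real.norm_two]
      _ ≤ ‖a * (2 * p - 1)‖ + ‖(2 * p - 1) * a‖ := norm_sub_le _ _
      _ = 2 * ‖a‖ := by
          rw [CStarRing.norm_mul_mem_unitary a hs, CStarRing.norm_mem_unitary_mul a hs, two_mul]
  linarith

theorem IsPartialIsometry.norm_le_one {v : E} (hv : IsPartialIsometry v) : ‖v‖ ≤ 1 := by
  have h := hv.isStarProjection_star_mul.norm_le
  rw [CStarRing.norm_star_mul_self] at h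
  nlinarith [norm_nonneg v]

def IsTangentAt (v w : E) : Prop :=
  ∃ a b : E, IsSelfAdjoint a ∧ IsSelfAdjoint b ∧ I • (a * v) - I • (v * b) = w

theorem mul_star_add_mul_star_eq_smul_commutator {a b v w : E} (ha : IsSelfAdjoint a)
    (hb : IsSelfAdjoint b) (h : I • (a * v) - I • (v * b) = w) :
    w * star v + v * star w = I • (a * (v * star v) - v * star v * a) := by
  have hw : star w = -I • (star v * a) + I • (b * star v) := by
    simp [← h, ha.star_eq, hb.star_eq, sub_eq_add_neg]
  rw [hw, ← h]
  simp only [sub_mul, mul_add, smul_mul_assoc, mul_smul_comm, neg_smul, mul_neg, mul_assoc,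
    smul_sub]
  abel

theorem IsPartialIsometry.norm_mul_star_add_mul_star_le {a b v w : E} (hv : IsPartialIsometry v)
    (ha : IsSelfAdjoint a) (hb : IsSelfAdjoint b) (h : I • (a * v) - I • (v * b) = w) :
    ‖w * star v + v * star w‖ ≤ ‖a‖ := by
  rw [mul_star_add_mul_star_eq_smul_commutator ha hb h, norm_smul, Complex.norm_I, one_mul]
  exact hv.isStarProjection_mul_star.norm_mul_sub_mul_le a

theorem IsPartialIsometry.exists_rep_norm_le {v w : E} (hv : IsPartialIsometry v)
    (hw : IsTangentAt v w) :
    ∃ a b : E, IsSelfAdjoint a ∧ IsSelfAdjoint b ∧ I • (a * v) - I • (v * b) = w ∧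
      ‖a‖ ≤ 3 * ‖w‖ ∧ ‖b‖ ≤ 3 * ‖w‖ := by
  obtain ⟨a, b, ha, hb, rfl⟩ := hw
  rw [← smul_sub, norm_smul, Complex.norm_I, one_mul]
  have hd := hv.isSelfAdjoint_compress ha hb
  have hrep := hv.block_decomposition (hv.one_sub_mul_mul_one_sub_eq_zero a b)
  have hp : IsStarProjection (v * star v) := hv.isStarProjection_mul_star
  have hq : IsStarProjection (star v * v) := hv.isStarProjection_star_mul
  set n := a * v - v * b
  set p := v * star v
  set t := (1 - p) * n * star v
  set u := star v * n * (1 - star v * v)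
  have hv' : ‖star v‖ ≤ 1 := by rw [norm_star]; exact hv.norm_le_one
  have hd' : ‖p * n * star v * p‖ ≤ ‖n‖ := by
    simpa using norm_mul_le_of_le (norm_mul_le_of_le (norm_mul_le_of_le hp.norm_le le_rfl) hv')
      hp.norm_le
  have ht' : ‖t‖ ≤ ‖n‖ := by
    simpa using norm_mul_le_of_le (norm_mul_le_of_le hp.one_sub.norm_le le_rfl) hv'
  have hu' : ‖u‖ ≤ ‖n‖ := by
    simpa using norm_mul_le_of_le (norm_mul_le_of_le hv' le_rfl) hq.one_sub.norm_le
  refine ⟨_, -(u + star u), hd.add (.add_star_self t), (IsSelfAdjoint.add_star_self u).neg,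
    by rw [← smul_sub, mul_neg, sub_neg_eq_add, hrep], ?_, ?_⟩
  · calc _ ≤ ‖p * n * star v * p‖ + (‖t‖ + ‖star t‖) :=
          (norm_add_le _ _).trans (add_le_add le_rfl (norm_add_le _ _))
      _ ≤ 3 * ‖n‖ := by rw [norm_star]; linarith
  · calc _ ≤ ‖u‖ + ‖star u‖ := by rw [norm_neg]; exact norm_add_le _ _
      _ ≤ 3 * ‖n‖ := by rw [norm_star]; linarith [norm_nonneg n]

theorem IsStarProjection.exp_smul_mul_mul_exp_neg_smul {p z : E} (hp : IsStarProjection p)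
    (hz : IsSelfAdjoint z) (t : ℝ) :
    IsStarProjection (exp ((I * t) • z) * p * exp (-(I * t) • z)) := by
  let _ : NormedAlgebra ℚ E := .restrictScalars ℚ ℂ E
  have hu : exp ((I * t) • z) ∈ unitary E :=
    exp_mem_unitary_of_mem_skewAdjoint (hz.smul_mem_skewAdjoint (by simp [skewAdjoint.mem_iff]))
  have hstar : exp (-(I * t) • z) = star (exp ((I * t) • z)) := by
    rw [star_exp, star_smul, hz.star_eq]; simp
  rw [hstar]
  exact hp.mul_mul_star (Unitary.star_mul_self_of_mem hu)

end CStarAlgebra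

section Finsler

theorem finslerNorm_le {a b v w : H →L[ℂ] H} (ha : IsSelfAdjoint a) (hb : IsSelfAdjoint b)
    (h : I • (a * v) - I • (v * b) = w) : finslerNorm v w ≤ max ‖a‖ ‖b‖ :=
  csInf_le ⟨0, fun _ ⟨a, _, _, _, _, hr⟩ => hr ▸ (norm_nonneg a).trans (le_max_left _ _)⟩
    ⟨a, b, ha, hb, h, rfl⟩

theorem le_finslerNorm {r : ℝ} {v w : H →L[ℂ] H} (hw : IsTangentAt v w)
    (h : ∀ a b, IsSelfAdjoint a → IsSelfAdjoint b → I • (a * v) - I • (v * b) = w →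
      r ≤ max ‖a‖ ‖b‖) : r ≤ finslerNorm v w := by
  obtain ⟨a, b, ha, hb, hab⟩ := hw
  exact le_csInf ⟨_, a, b, ha, hb, hab, rfl⟩ fun _ ⟨a, b, ha, hb, hab, hr⟩ => hr ▸ h a b ha hb hab

theorem IsPartialIsometry.norm_mul_star_add_mul_star_le_finslerNorm {v w : H →L[ℂ] H}
    (hv : IsPartialIsometry v) (hw : IsTangentAt v w) :
    ‖w * star v + v * star w‖ ≤ finslerNorm v w :=
  le_finslerNorm hw fun _ _ ha hb h => (hv.norm_mul_star_add_mul_star_le ha hb h).trans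
    (le_max_left _ _)

-- `(a, b)` is corrected into a representation of `w'` at `v'` by a small representation of the
-- defect `e`, which is tangent at `v'`
theorem IsPartialIsometry.finslerNorm_le_max_add {a b v w v' w' : H →L[ℂ] H}
    (hv' : IsPartialIsometry v') (hw' : IsTangentAt v' w') (ha : IsSelfAdjoint a)
    (hb : IsSelfAdjoint b) (h : I • (a * v) - I • (v * b) = w) :
    finslerNorm v' w' ≤ max ‖a‖ ‖b‖ + 6 * (1 + max ‖a‖ ‖b‖) * (‖w' - w‖ + ‖v' - v‖) := by
  obtain ⟨a', b', ha', hb', rfl⟩ := hw'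
  obtain ⟨x, y, hx, hy, hxy, hx', hy'⟩ := hv'.exists_rep_norm_le ⟨_, _, ha'.sub ha, hb'.sub hb, rfl⟩
  set e := I • ((a' - a) * v') - I • (v' * (b' - b))
  have he : e = (I • (a' * v') - I • (v' * b') - w) - I • (a * (v' - v) - (v' - v) * b) := by
    rw [← h]; simp only [e, mul_sub, sub_mul, smul_sub]; abel
  have he' : ‖e‖ ≤ ‖I • (a' * v') - I • (v' * b') - w‖ + 2 * max ‖a‖ ‖b‖ * ‖v' - v‖ := by
    rw [he]
    refine (norm_sub_le _ _).trans (add_le_add le_rfl ?_)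
    rw [norm_smul, norm_I, one_mul]
    calc _ ≤ ‖a‖ * ‖v' - v‖ + ‖v' - v‖ * ‖b‖ :=
          (norm_sub_le _ _).trans (add_le_add (norm_mul_le _ _) (norm_mul_le _ _))
      _ ≤ _ := by nlinarith [le_max_left ‖a‖ ‖b‖, le_max_right ‖a‖ ‖b‖, norm_nonneg (v' - v)]
  have hrep : I • ((a + x) * v') - I • (v' * (b + y)) = I • (a' * v') - I • (v' * b') := by
    calc _ = I • (a * v') - I • (v' * b) + (I • (x * v') - I • (v' * y)) := by
          simp only [add_mul, mul_add, smul_add]; abel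
      _ = _ := by rw [hxy]; simp only [e, sub_mul, mul_sub, smul_sub]; abel
  calc _ ≤ max ‖a + x‖ ‖b + y‖ := finslerNorm_le (ha.add hx) (hb.add hy) hrep
    _ ≤ max ‖a‖ ‖b‖ + 3 * ‖e‖ := max_le
        ((norm_add_le _ _).trans (add_le_add (le_max_left _ _) hx'))
        ((norm_add_le _ _).trans (add_le_add (le_max_right _ _) hy'))
    _ ≤ _ := by nlinarith [norm_nonneg (I • (a' * v') - I • (v' * b') - w), norm_nonneg (v' - v),
        (norm_nonneg a).trans (le_max_left ‖a‖ ‖b‖)]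

theorem IsPartialIsometry.finslerNorm_le_finslerNorm_add {v w v' w' : H →L[ℂ] H}
    (hv' : IsPartialIsometry v') (hw' : IsTangentAt v' w') (hw : IsTangentAt v w) :
    finslerNorm v' w' ≤ finslerNorm v w + 6 * (1 + finslerNorm v w) * (‖w' - w‖ + ‖v' - v‖) := by
  set D := ‖w' - w‖ + ‖v' - v‖
  have hD : 0 < 1 + 6 * D := by positivity
  have : (finslerNorm v' w' - 6 * D) / (1 + 6 * D) ≤ finslerNorm v w :=
    le_finslerNorm hw fun a b ha hb h => by
      rw [div_le_iff₀ hD]; linarith [hv'.finslerNorm_le_max_add hw' ha hb h]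
  rw [div_le_iff₀ hD] at this
  linarith

theorem continuousOn_finslerNorm {α : Type*} [TopologicalSpace α] {s : Set α}
    {γ γ' : α → H →L[ℂ] H} (hγ : ContinuousOn γ s) (hγ' : ContinuousOn γ' s)
    (hpi : ∀ t ∈ s, IsPartialIsometry (γ t)) (htan : ∀ t ∈ s, IsTangentAt (γ t) (γ' t)) :
    ContinuousOn (fun t => finslerNorm (γ t) (γ' t)) s := by
  intro t₀ ht₀
  set c := finslerNorm (γ t₀) (γ' t₀)
  set d := fun t => ‖γ' t - γ' t₀‖ + ‖γ t - γ t₀‖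
  have hd : Tendsto d (𝓝[s] t₀) (𝓝 0) := by
    simpa [d] using ((Tendsto.sub (hγ' t₀ ht₀) (tendsto_const_nhds (x := γ' t₀))).norm.add
      (Tendsto.sub (hγ t₀ ht₀) (tendsto_const_nhds (x := γ t₀))).norm)
  have hlim (F : ℝ → ℝ) (hF : Continuous F) : Tendsto (fun t => F (d t)) (𝓝[s] t₀) (𝓝 (F 0)) :=
    (hF.tendsto 0).comp hd
  have hup : ∀ t ∈ s, finslerNorm (γ t) (γ' t) ≤ c + 6 * (1 + c) * d t := fun t ht =>
    (hpi t ht).finslerNorm_le_finslerNorm_add (htan t ht) (htan t₀ ht₀)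
  have hlow : ∀ t ∈ s, c ≤ finslerNorm (γ t) (γ' t) + 6 * (1 + finslerNorm (γ t) (γ' t)) * d t :=
    fun t ht => by
      simpa only [d, norm_sub_rev] using
        (hpi t₀ ht₀).finslerNorm_le_finslerNorm_add (htan t₀ ht₀) (htan t ht)
  refine tendsto_of_tendsto_of_tendsto_of_le_of_le'
    (g := fun t => c - 6 * (1 + (c + 6 * (1 + c) * d t)) * d t)
    (h := fun t => c + 6 * (1 + c) * d t) ?_ ?_ ?_ ?_
  · simpa using hlim (fun x => c - 6 * (1 + (c + 6 * (1 + c) * x)) * x) (by fun_prop)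
  · simpa using hlim (fun x => c + 6 * (1 + c) * x) (by fun_prop)
  · filter_upwards [self_mem_nhdsWithin] with t ht
    have hdt : 0 ≤ d t := by positivity
    nlinarith [hup t ht, hlow t ht]
  · filter_upwards [self_mem_nhdsWithin] with t ht using hup t ht

-- The `p`-codiagonal part `z p + p z - 2 p z p = (2 p - 1) [p, z]` of `z` represents the same
-- tangent vector, and `2 p - 1` is unitary.
theorem IsStarProjection.finslerNorm_smul_commutator {p z : H →L[ℂ] H} (hp : IsStarProjection p)
    (hz : IsSelfAdjoint z) : finslerNorm p (I • (z * p - p * z)) = ‖I • (z * p - p * z)‖ := by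
  have hpp : p * p = p := hp.isIdempotentElem
  have hx : z * p + p * z - 2 * (p * z * p) = (2 * p - 1) * (p * z - z * p) := by
    calc _ = z * p + p * z - 2 * (p * z * p) + 2 * (p * p * z) - 2 * (p * z) := by
          rw [hpp]; noncomm_ring
      _ = _ := by noncomm_ring
  have hxsa : IsSelfAdjoint (z * p + p * z - 2 * (p * z * p)) := by
    simp only [IsSelfAdjoint, star_sub, star_add, star_mul, hz.star_eq, hp.isSelfAdjoint.star_eq,
      star_ofNat]
    noncomm_ring
  have hrep : I • ((z * p + p * z - 2 * (p * z * p)) * p)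
      - I • (p * (z * p + p * z - 2 * (p * z * p))) = I • (z * p - p * z) := by
    rw [← smul_sub]
    congr 1
    calc _ = z * (p * p) - (p * p) * z - 2 * (p * z * (p * p)) + 2 * ((p * p) * z * p) := by
          noncomm_ring
      _ = _ := by rw [hpp]; noncomm_ring
  refine le_antisymm ?_ ?_
  · calc _ ≤ _ := finslerNorm_le hxsa hxsa hrep
      _ = _ := by
        rw [max_self, hx, norm_smul, norm_I, one_mul, CStarRing.norm_mem_unitary_mul _
          hp.two_mul_sub_one_mem_unitary, norm_sub_rev]
  · have hrep' : I • (z * p) - I • (p * z) = I • (z * p - p * z) := (smul_sub _ _ _).symm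
    have h := hp.isPartialIsometry.norm_mul_star_add_mul_star_le_finslerNorm ⟨z, z, hz, hz, hrep'⟩
    rwa [mul_star_add_mul_star_eq_smul_commutator hz hz hrep', hp.isSelfAdjoint.star_eq, hpp] at h

end Finsler

end

theorem projection_geodesic_minimal_among_partial_isometries_general
    (P₀ P₁ Z : H →L[ℂ] H)
    (hP₀sa : IsSelfAdjoint P₀) (hP₀2 : P₀ * P₀ = P₀)
    (hP₁sa : IsSelfAdjoint P₁) (hP₁2 : P₁ * P₁ = P₁)
    (hZ : IsSelfAdjoint Z)
    (δ : ℝ → H →L[ℂ] H)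
    (hδ : ∀ t : ℝ, δ t =
      exp ((Complex.I * (t : ℂ)) • Z) * P₀ * exp ((-(Complex.I * (t : ℂ))) • Z))
    (hδmin : ∀ (a b : ℝ) (ρ ρ' : ℝ → H →L[ℂ] H), a ≤ b →
      (∀ t ∈ Icc a b, HasDerivWithinAt ρ (ρ' t) (Icc a b) t) →
      ContinuousOn ρ' (Icc a b) →
      (∀ t ∈ Icc a b, IsSelfAdjoint (ρ t) ∧ ρ t * ρ t = ρ t) →
      ρ a = P₀ → ρ b = P₁ →
      (∫ t in (0:ℝ)..1, ‖Complex.I • (Z * δ t - δ t * Z)‖) ≤ ∫ t in a..b, ‖ρ' t‖) :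
    ∀ (a b : ℝ) (γ γ' : ℝ → H →L[ℂ] H), a ≤ b →
      (∀ t ∈ Icc a b, HasDerivWithinAt γ (γ' t) (Icc a b) t) →
      ContinuousOn γ' (Icc a b) →
      (∀ t ∈ Icc a b, γ t * star (γ t) * γ t = γ t) →
      (∀ t ∈ Icc a b, ∃ A B : H →L[ℂ] H, IsSelfAdjoint A ∧ IsSelfAdjoint B ∧
        γ' t = Complex.I • (A * γ t) - Complex.I • (γ t * B)) →
      γ a = P₀ → γ b = P₁ →
      (∫ t in (0:ℝ)..1, finslerNorm (δ t) (Complex.I • (Z * δ t - δ t * Z))) ≤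
        ∫ t in a..b, finslerNorm (γ t) (γ' t) := by
  intro a b γ γ' hab hγ hγ' hpi htan hγa hγb
  have hpi : ∀ t ∈ Icc a b, IsPartialIsometry (γ t) := hpi
  have htan : ∀ t ∈ Icc a b, IsTangentAt (γ t) (γ' t) := fun t ht =>
    let ⟨A, B, hA, hB, h⟩ := htan t ht; ⟨A, B, hA, hB, h.symm⟩
  have hγc : ContinuousOn γ (Icc a b) := fun t ht => (hγ t ht).continuousWithinAt
  have hρ' : ContinuousOn (fun t => γ' t * star (γ t) + γ t * star (γ' t)) (Icc a b) :=
    (hγ'.mul hγc.star).add (hγc.mul hγ'.star)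
  have hmin := hδmin a b (fun t => γ t * star (γ t)) _ hab
    (fun t ht => (hγ t ht).mul (hγ t ht).star) hρ'
    (fun t ht => ⟨(hpi t ht).isStarProjection_mul_star.isSelfAdjoint,
      (hpi t ht).isStarProjection_mul_star.isIdempotentElem⟩)
    (by rw [hγa, hP₀sa.star_eq, hP₀2]) (by rw [hγb, hP₁sa.star_eq, hP₁2])
  have hδproj (t : ℝ) : IsStarProjection (δ t) := by
    rw [hδ t]; exact IsStarProjection.exp_smul_mul_mul_exp_neg_smul ⟨hP₀2, hP₀sa⟩ hZ t
  calc _ = ∫ t in (0:ℝ)..1, ‖Complex.I • (Z * δ t - δ t * Z)‖ :=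
        intervalIntegral.integral_congr fun t _ => (hδproj t).finslerNorm_smul_commutator hZ
    _ ≤ _ := hmin
    _ ≤ _ := intervalIntegral.integral_mono_on hab (hρ'.norm.intervalIntegrable_of_Icc hab)
        ((continuousOn_finslerNorm hγc hγ' hpi htan).intervalIntegrable_of_Icc hab)
        fun t ht => (hpi t ht).norm_mul_star_add_mul_star_le_finslerNorm (htan t ht)

/-- Let `P₀`, `P₁` be orthogonal projections, `Z` selfadjoint and
`P₀`-codiagonal, and `δ(t) = e^{itZ} P₀ e^{−itZ}`, `t ∈ [0,1]`, with `δ(1) = P₁`.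
If `δ` is minimal (for operator-norm length) among `C¹` curves of orthogonal projections
joining `P₀` and `P₁`, then `δ` is also minimal, for the quotient Finsler length, among
`C¹` curves of partial isometries joining `P₀` and `P₁`. -/
theorem projection_geodesic_minimal_among_partial_isometries
    (P₀ P₁ Z : H →L[ℂ] H)
    (hP₀sa : IsSelfAdjoint P₀) (hP₀2 : P₀ * P₀ = P₀)
    (hP₁sa : IsSelfAdjoint P₁) (hP₁2 : P₁ * P₁ = P₁)
    (hZ : IsSelfAdjoint Z)
    (hZcod : P₀ * Z * P₀ = 0 ∧ (1 - P₀) * Z * (1 - P₀) = 0)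
    (δ : ℝ → H →L[ℂ] H)
    (hδ : ∀ t : ℝ, δ t =
      exp ((Complex.I * (t : ℂ)) • Z) * P₀ * exp ((-(Complex.I * (t : ℂ))) • Z))
    (hδ1 : δ 1 = P₁)
    (hδmin : ∀ (a b : ℝ) (ρ ρ' : ℝ → H →L[ℂ] H), a ≤ b →
      (∀ t ∈ Icc a b, HasDerivWithinAt ρ (ρ' t) (Icc a b) t) →
      ContinuousOn ρ' (Icc a b) →
      (∀ t ∈ Icc a b, IsSelfAdjoint (ρ t) ∧ ρ t * ρ t = ρ t) →
      ρ a = P₀ → ρ b = P₁ →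
      (∫ t in (0:ℝ)..1, ‖Complex.I • (Z * δ t - δ t * Z)‖) ≤ ∫ t in a..b, ‖ρ' t‖) :
    ∀ (a b : ℝ) (γ γ' : ℝ → H →L[ℂ] H), a ≤ b →
      (∀ t ∈ Icc a b, HasDerivWithinAt γ (γ' t) (Icc a b) t) →
      ContinuousOn γ' (Icc a b) →
      (∀ t ∈ Icc a b, γ t * star (γ t) * γ t = γ t) →
      (∀ t ∈ Icc a b, ∃ A B : H →L[ℂ] H, IsSelfAdjoint A ∧ IsSelfAdjoint B ∧
        γ' t = Complex.I • (A * γ t) - Complex.I • (γ t * B)) →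
      γ a = P₀ → γ b = P₁ →
      (∫ t in (0:ℝ)..1, finslerNorm (δ t) (Complex.I • (Z * δ t - δ t * Z))) ≤
        ∫ t in a..b, finslerNorm (γ t) (γ' t) :=
  projection_geodesic_minimal_among_partial_isometries_general P₀ P₁ Z hP₀sa hP₀2 hP₁sa hP₁2 hZ δ hδ
    hδmin
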